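/- arXiv:1201.2712 — 2 statements merged into one kernel-verified Lean document; each statement's English description precedes it below -/
import Mathlib

section
/- Let D be an arc-colored digraph such that every directed cycle of D is monochromatic. Then every directed cycle of the k-colored closure C_k(D) contains a symmetrical arc, i.e., an arc (u,v) with (v,u) also an arc of C_k(D). -/
variable {V : Type*}

/-- `l` is a directed path from `u` to `v` in the digraph with arc relation `A`:
a nonempty list of distinct vertices, consecutive ones joined by arcs,
starting at `u` and ending at `v`. -/
def IsPathFrom (A : V → V → Prop) (u v : V) (l : List V) : Prop :=
  l.Chain' A ∧ l.Nodup ∧ l.head? = some u ∧ l.getLast? = some v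

/-- The set of colors used by the consecutive arcs of the list `l`. -/
def listColors (col : V → V → ℕ) (l : List V) : Finset ℕ :=
  ((l.zip l.tail).map fun p => col p.1 p.2).toFinset

/-- There is a directed path from `u` to `v` using at most `k` colors. -/
def ReachK (A : V → V → Prop) (col : V → V → ℕ) (k : ℕ) (u v : V) : Prop :=
  ∃ l, IsPathFrom A u v l ∧ (listColors col l).card ≤ k

/-- There is a directed path from `u` to `v`. -/
def Reach (A : V → V → Prop) (u v : V) : Prop :=
  ∃ l, IsPathFrom A u v l

/-- A nonempty list `l` of distinct vertices is a directed cycle: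
consecutive vertices are joined by arcs, and there is a closing arc from
the last vertex back to the first one. -/
def IsCycle (A : V → V → Prop) (l : List V) : Prop :=
  l ≠ [] ∧ l.Chain' A ∧ l.Nodup ∧
    ∀ a b, l.getLast? = some a → l.head? = some b → A a b

/-- The set of colors of the arcs of the cycle `l` (including the closing arc). -/
def cycleColors (col : V → V → ℕ) (l : List V) : Finset ℕ :=
  listColors col (l ++ l.take 1)

/-- `(u,v)` is one of the arcs of the cycle `l`. -/
def ArcOfCycle (l : List V) (u v : V) : Prop :=
  (u, v) ∈ l.zip l.tail ∨ (l.getLast? = some u ∧ l.head? = some v)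

/-- `K` is a `k`-colored kernel of the digraph `A` arc-colored by `col`:
no directed path using at most `k` colors joins two distinct vertices of `K`,
and every vertex outside of `K` has a directed path using at most `k` colors
to some vertex of `K`. -/
def IsKColoredKernel (A : V → V → Prop) (col : V → V → ℕ) (k : ℕ) (K : Set V) : Prop :=
  (∀ u ∈ K, ∀ v ∈ K, u ≠ v → ¬ ReachK A col k u v) ∧
  (∀ u, u ∉ K → ∃ v ∈ K, ReachK A col k u v)

/-- The arc relation of the `k`-colored closure of the digraph `A` colored by `col`. -/
def ClosureArc (A : V → V → Prop) (col : V → V → ℕ) (k : ℕ) (u v : V) : Prop :=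
  u ≠ v ∧ ReachK A col k u v

/-- `K` is a kernel of the digraph with arc relation `B`. -/
def IsKernel (B : V → V → Prop) (K : Set V) : Prop :=
  (∀ u ∈ K, ∀ v ∈ K, u ≠ v → ¬ B u v) ∧ (∀ u, u ∉ K → ∃ v ∈ K, B u v)

/-! If `v` reaches `u` in `D`, every arc `(x, y)` of a path from `u` to `v` is followed by a path
from `y` back to `x`; together with `(x, y)` it closes a cycle of `D`, which is monochromatic, so
`y` reaches `x` using only the color of `(x, y)`. Chaining these return paths backwards along the
path gives a path from `v` to `u` using only colors of the original path. Along a cycle of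
`C_k(D)` every vertex reaches every other one in `D`, so every arc of the cycle is symmetrical. -/

open Relation

section ColoredPaths

variable {A : V → V → Prop} {col : V → V → ℕ} {S : Finset ℕ} {l : List V} {u v x y : V}

def arcsColoredIn (A : V → V → Prop) (col : V → V → ℕ) (S : Finset ℕ) (x y : V) :
    Prop :=
  A x y ∧ col x y ∈ S

theorem arcsColoredIn_le : arcsColoredIn A col S ≤ A := fun _ _ h => h.1

theorem arcsColoredIn_mono {T : Finset ℕ} (hST : S ⊆ T) :
    arcsColoredIn A col S ≤ arcsColoredIn A col T :=
  fun _ _ h => ⟨h.1, hST h.2⟩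

@[simp]
theorem listColors_singleton : listColors col [x] = ∅ := rfl

@[simp]
theorem listColors_cons_cons :
    listColors col (x :: y :: l) = insert (col x y) (listColors col (y :: l)) := by
  simp [listColors]

theorem listColors_append_singleton (hl : l.getLast? = some x) :
    listColors col (l ++ [y]) = insert (col x y) (listColors col l) := by
  induction l with
  | nil => simp at hl
  | cons a t ih =>
    rcases t with _ | ⟨b, t⟩
    · obtain rfl : a = x := by simpa using hl
      simp
    · rw [List.getLast?_cons_cons] at hl
      simp only [List.cons_append, listColors_cons_cons] at ih ⊢
      rw [ih hl, Finset.insert_comm]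

theorem cycleColors_eq_insert (hy : l.head? = some y) (hx : l.getLast? = some x) :
    cycleColors col l = insert (col x y) (listColors col l) := by
  obtain ⟨t, rfl⟩ := List.head?_eq_some_iff.1 hy
  exact listColors_append_singleton hx

theorem reflTransGen_of_isChain {r : V → V → Prop} (hl : l.IsChain r)
    (hu : l.head? = some u) (hv : l.getLast? = some v) : ReflTransGen r u v := by
  obtain ⟨t, rfl⟩ := List.head?_eq_some_iff.1 hu
  exact List.relationReflTransGen_of_exists_isChain_cons t hl
    (Option.some_inj.1 ((List.getLast?_eq_some_getLast _).symm.trans hv))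

theorem isChain_arcsColoredIn_listColors (hl : l.IsChain A) :
    l.IsChain (arcsColoredIn A col (listColors col l)) := by
  induction l with
  | nil => exact .nil
  | cons a t ih =>
    rcases t with _ | ⟨b, t⟩
    · exact .singleton a
    · rw [List.isChain_cons_cons] at hl
      rw [listColors_cons_cons, List.isChain_cons_cons]
      exact ⟨⟨hl.1, Finset.mem_insert_self _ _⟩,
        (ih hl.2).imp (arcsColoredIn_mono (Finset.subset_insert _ _))⟩

theorem listColors_subset_of_isChain (hl : l.IsChain (arcsColoredIn A col S)) :
    listColors col l ⊆ S := by
  induction l with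
  | nil => simp [listColors]
  | cons a t ih =>
    rcases t with _ | ⟨b, t⟩
    · simp
    · rw [List.isChain_cons_cons] at hl
      rw [listColors_cons_cons]
      exact Finset.insert_subset hl.1.2 (ih hl.2)

theorem IsPathFrom.reflTransGen_arcsColoredIn (hp : IsPathFrom A u v l) :
    ReflTransGen (arcsColoredIn A col (listColors col l)) u v :=
  reflTransGen_of_isChain (isChain_arcsColoredIn_listColors hp.1) hp.2.2.1 hp.2.2.2

theorem exists_isPathFrom_of_reflTransGen {r : V → V → Prop} (h : ReflTransGen r u v) :
    ∃ l, IsPathFrom r u v l := by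
  induction h using ReflTransGen.head_induction_on with
  | refl => exact ⟨[v], .singleton v, List.nodup_singleton v, rfl, rfl⟩
  | @head a c hac _ ih =>
    obtain ⟨l, hc, hn, hh, hl⟩ := ih
    by_cases ha : a ∈ l
    · obtain ⟨s, t, rfl⟩ := List.append_of_mem ha
      refine ⟨a :: t, hc.right_of_append, hn.of_append_right, rfl, ?_⟩
      rwa [List.getLast?_append_cons] at hl
    · obtain ⟨t, rfl⟩ := List.head?_eq_some_iff.1 hh
      refine ⟨a :: c :: t, hc.cons_cons hac, List.nodup_cons.2 ⟨ha, hn⟩, rfl, ?_⟩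
      rwa [List.getLast?_cons_cons]

theorem exists_isPathFrom_of_reflTransGen_arcsColoredIn
    (h : ReflTransGen (arcsColoredIn A col S) u v) :
    ∃ l, IsPathFrom A u v l ∧ listColors col l ⊆ S := by
  obtain ⟨l, hc, hn, hu, hv⟩ := exists_isPathFrom_of_reflTransGen h
  exact ⟨l, ⟨hc.imp arcsColoredIn_le, hn, hu, hv⟩, listColors_subset_of_isChain hc⟩

theorem IsPathFrom.isCycle (hp : IsPathFrom A y x l) (hxy : A x y) : IsCycle A l := by
  obtain ⟨hc, hn, hy, hx⟩ := hp
  refine ⟨fun h => by simp [h] at hy, hc, hn, ?_⟩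
  rintro a b ha hb
  rw [hx, Option.some_inj] at ha
  rw [hy, Option.some_inj] at hb
  exact ha ▸ hb ▸ hxy

theorem ClosureArc.reflTransGen {k : ℕ} (h : ClosureArc A col k u v) : ReflTransGen A u v := by
  obtain ⟨-, p, hp, -⟩ := h
  exact reflTransGen_of_isChain hp.1 hp.2.2.1 hp.2.2.2

end ColoredPaths

def CyclesMonochromatic (A : V → V → Prop) (col : V → V → ℕ) : Prop :=
  ∀ l : List V, IsCycle A l → (cycleColors col l).card ≤ 1

section MonochromaticCycles

variable {A : V → V → Prop} {col : V → V → ℕ} {S : Finset ℕ} {u v x y : V}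

theorem reflTransGen_arcsColoredIn_singleton_of_arc (hmono : CyclesMonochromatic A col)
    (hxy : A x y) (hyx : ReflTransGen A y x) :
    ReflTransGen (arcsColoredIn A col {col x y}) y x := by
  obtain ⟨l, hl⟩ := exists_isPathFrom_of_reflTransGen hyx
  have hcard := hmono l (hl.isCycle hxy)
  rw [cycleColors_eq_insert hl.2.2.1 hl.2.2.2] at hcard
  have hsub : listColors col l ⊆ {col x y} := fun c hc =>
    Finset.card_le_one.1 hcard c (Finset.mem_insert_of_mem hc) _ (Finset.mem_insert_self _ _) ▸
      Finset.mem_singleton_self _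
  exact ReflTransGen.mono (arcsColoredIn_mono hsub) _ _ hl.reflTransGen_arcsColoredIn

theorem reflTransGen_arcsColoredIn_symm (hmono : CyclesMonochromatic A col)
    (huv : ReflTransGen (arcsColoredIn A col S) u v) (hvu : ReflTransGen A v u) :
    ReflTransGen (arcsColoredIn A col S) v u := by
  induction huv with
  | refl => exact .refl
  | @tail b c hub hbc ih =>
    have hcb : ReflTransGen A c b := hvu.trans (ReflTransGen.mono arcsColoredIn_le _ _ hub)
    have hcb' : ReflTransGen (arcsColoredIn A col S) c b :=
      ReflTransGen.mono (arcsColoredIn_mono (Finset.singleton_subset_iff.2 hbc.2)) _ _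
        (reflTransGen_arcsColoredIn_singleton_of_arc hmono hbc.1 hcb)
    exact hcb'.trans (ih (hvu.head hbc.1))

theorem ReachK.symm_of_reflTransGen (hmono : CyclesMonochromatic A col) {k : ℕ}
    (huv : ReachK A col k u v) (hvu : ReflTransGen A v u) :
    ReachK A col k v u := by
  obtain ⟨p, hp, hpk⟩ := huv
  obtain ⟨q, hq, hqp⟩ := exists_isPathFrom_of_reflTransGen_arcsColoredIn
    (reflTransGen_arcsColoredIn_symm hmono hp.reflTransGen_arcsColoredIn hvu)
  exact ⟨q, hq, (Finset.card_le_card hqp).trans hpk⟩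

end MonochromaticCycles

/-- If every directed cycle of `D` is monochromatic, then every directed cycle of
the `k`-colored closure of `D` contains a symmetrical arc. -/
theorem stmt_7 (A : V → V → Prop) (col : V → V → ℕ) (k : ℕ)
    (h : ∀ l : List V, IsCycle A l → (cycleColors col l).card ≤ 1) :
    ∀ l : List V, IsCycle (ClosureArc A col k) l →
      ∃ a b, ArcOfCycle l a b ∧ ClosureArc A col k b a := by
  rintro (_ | ⟨a, _ | ⟨b, t⟩⟩) ⟨hne, hchain, -, hclose⟩
  · exact absurd rfl hne
  · exact absurd rfl (hclose a a rfl rfl).1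
  obtain ⟨z, hz⟩ : ∃ z, (b :: t).getLast? = some z :=
    ⟨_, List.getLast?_eq_some_getLast (List.cons_ne_nil b t)⟩
  have hba : ReflTransGen A b a :=
    reflTransGen_closed (fun _ _ => ClosureArc.reflTransGen) _ _
      ((reflTransGen_of_isChain hchain.tail rfl hz).tail (hclose z a hz rfl))
  obtain ⟨hab, hreach⟩ := hchain.rel
  exact ⟨a, b, Or.inl (by simp), hab.symm, hreach.symm_of_reflTransGen h hba⟩
end

section
/- Let D be an arc-colored locally out-tournament digraph such that every arc of D belongs to a directed cycle and every directed cycle of D uses at most k colors. If there is a directed path from u to v, then there is a directed path from v to u using at most k colors. -/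
variable {V : Type*}

/-!
If `u` and `x` lie on a common directed cycle `C` and `x → y` with `y ∉ C`, then `u` and `y` also
lie on a common cycle. Walk along `C` starting at `x`: as long as the current vertex dominates `y`,
the next vertex of `C` and `y` are both out-neighbours of it, hence comparable. So either every
vertex of `C` dominates `y`, and the arc `u → y` lies on some cycle, or two consecutive vertices
`a → b` of `C` satisfy `a → y → b`, and `y` can be inserted between them. Following a path from `u`
to `v`, we get a cycle through `u` and `v`; its segment from `v` to `u` uses at most `k` colors.
-/

open Relation

def IsLocallyOutTournament (A : V → V → Prop) : Prop :=
  ∀ u v w : V, v ≠ w → A u v → A u w → (A v w ↔ ¬ A w v)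

def OnCommonCycle (A : V → V → Prop) (u v : V) : Prop :=
  ∃ c, IsCycle A c ∧ u ∈ c ∧ v ∈ c

section
variable {A : V → V → Prop} {col : V → V → ℕ} {k : ℕ}

theorem IsPathFrom.reflTransGen {u v : V} {l : List V} (h : IsPathFrom A u v l) :
    ReflTransGen A u v := by
  obtain ⟨hc, -, hu, hv⟩ := h
  cases l with
  | nil => simp at hu
  | cons a t =>
    obtain rfl : a = u := by simpa using hu
    exact List.relationReflTransGen_of_exists_isChain_cons t hc
      (by simpa [List.getLast?_eq_some_getLast] using hv)

theorem reachK_self (v : V) : ReachK A col k v v :=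
  ⟨[v], ⟨List.isChain_singleton v, List.nodup_singleton v, rfl, rfl⟩, by simp [listColors]⟩

theorem zip_tail_prefix_append : ∀ p r : List V, p.zip p.tail <+: (p ++ r).zip (p ++ r).tail
  | [], _ => by simp
  | [_], _ => by simp
  | a :: b :: t, r => by
    simpa [List.cons_prefix_cons] using zip_tail_prefix_append (b :: t) r

theorem listColors_subset_of_prefix {p q : List V} (h : p <+: q) :
    listColors col p ⊆ listColors col q := by
  obtain ⟨r, rfl⟩ := h
  intro c hc
  simp only [listColors, List.mem_toFinset, List.mem_map] at hc ⊢
  obtain ⟨e, he, rfl⟩ := hc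
  exact ⟨e, (zip_tail_prefix_append p r).sublist.mem he, rfl⟩

theorem IsCycle.rotate {l₁ l₂ : List V} {x : V} (h : IsCycle A (l₁ ++ x :: l₂)) :
    IsCycle A (x :: (l₂ ++ l₁)) := by
  obtain ⟨-, hc, hn, hclose⟩ := h
  rcases eq_or_ne l₁ [] with rfl | hl₁
  · exact ⟨by simp, by simpa using hc, by simpa using hn, by simpa using hclose⟩
  have hperm : (x :: (l₂ ++ l₁)).Perm (l₁ ++ x :: l₂) :=
    (List.perm_append_comm.cons x).trans List.perm_middle.symm
  rw [List.Chain', List.isChain_append] at hc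
  obtain ⟨hc₁, hc₂, hlink⟩ := hc
  have hlast : (x :: (l₂ ++ l₁)).getLast? = l₁.getLast? := by
    rw [← List.cons_append, List.getLast?_append_of_ne_nil _ hl₁]
  refine ⟨by simp, ?_, hperm.nodup_iff.mpr hn, ?_⟩
  · rw [List.Chain', ← List.cons_append, List.isChain_append]
    refine ⟨hc₂, hc₁, fun a ha b hb => hclose a b ?_ ?_⟩
    · rwa [List.getLast?_append_of_ne_nil _ (by simp)]
    · rwa [List.head?_append_of_ne_nil _ hl₁]
  · rintro a b ha ⟨⟩
    exact hlink a (hlast ▸ ha) x rfl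

theorem IsCycle.exists_perm_cons {c : List V} {x : V} (hc : IsCycle A c) (hx : x ∈ c) :
    ∃ t, IsCycle A (x :: t) ∧ (x :: t).Perm c := by
  obtain ⟨l₁, l₂, rfl⟩ := List.append_of_mem hx
  exact ⟨l₂ ++ l₁, hc.rotate, (List.perm_append_comm.cons x).trans List.perm_middle.symm⟩

theorem IsCycle.insert {l₁ l₂ : List V} {a b y : V} (h : IsCycle A (l₁ ++ a :: b :: l₂))
    (hy : y ∉ l₁ ++ a :: b :: l₂) (hay : A a y) (hyb : A y b) :
    IsCycle A (l₁ ++ a :: y :: b :: l₂) := by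
  obtain ⟨-, hc, hn, hclose⟩ := h
  rw [List.Chain', List.isChain_append] at hc
  obtain ⟨hc₁, hc₂, hlink⟩ := hc
  refine ⟨by simp, ?_, ?_, fun p q hp hq => hclose p q ?_ ?_⟩
  · rw [List.Chain', List.isChain_append]
    refine ⟨hc₁, ?_, by simpa using hlink⟩
    exact List.isChain_cons_cons.mpr ⟨hay, List.isChain_cons_cons.mpr
      ⟨hyb, (List.isChain_cons_cons.mp hc₂).2⟩⟩
  · have hperm : (l₁ ++ a :: y :: b :: l₂).Perm (y :: (l₁ ++ a :: b :: l₂)) := by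
      simpa using List.perm_middle (l₁ := l₁ ++ [a]) (l₂ := b :: l₂) (a := y)
    exact hperm.nodup_iff.mpr (List.nodup_cons.mpr ⟨hy, hn⟩)
  · rw [List.getLast?_append_of_ne_nil _ (by simp)] at hp ⊢
    simpa using hp
  · rw [List.head?_append] at hq ⊢
    simpa using hq

theorem ArcOfCycle.mem {l : List V} {u v : V} (h : ArcOfCycle l u v) : u ∈ l ∧ v ∈ l := by
  rcases h with h | ⟨hu, hv⟩
  · exact ⟨(List.of_mem_zip h).1, l.tail_sublist.mem (List.of_mem_zip h).2⟩
  · exact ⟨List.mem_of_mem_getLast? hu, List.mem_of_mem_head? hv⟩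

theorem IsLocallyOutTournament.dominates_or_exists_insertion (hA : IsLocallyOutTournament A)
    {x y : V} {t : List V} (hc : (x :: t).IsChain A) (hxy : A x y) (hy : y ∉ x :: t) :
    (∀ z ∈ x :: t, A z y) ∨
      ∃ l₁ a b l₂, x :: t = l₁ ++ a :: b :: l₂ ∧ A a y ∧ A y b := by
  induction t generalizing x with
  | nil => exact Or.inl (by simpa using hxy)
  | cons b t ih =>
    obtain ⟨hxb, hc⟩ := List.isChain_cons_cons.mp hc
    by_cases hyb : A y b
    · exact Or.inr ⟨[], x, b, t, rfl, hxy, hyb⟩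
    have hby : A b y := (hA x b y (by grind) hxb hxy).mpr hyb
    rcases ih hc hby (by grind) with hall | ⟨l₁, a, a', l₂, heq, hay, hya'⟩
    · exact Or.inl (by simpa [hxy] using hall)
    · exact Or.inr ⟨x :: l₁, a, a', l₂, by rw [heq]; rfl, hay, hya'⟩

theorem onCommonCycle_of_arc
    (harc : ∀ u v : V, A u v → ∃ l : List V, IsCycle A l ∧ ArcOfCycle l u v)
    {u v : V} (h : A u v) : OnCommonCycle A u v := by
  obtain ⟨c, hc, hcuv⟩ := harc u v h
  exact ⟨c, hc, hcuv.mem⟩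

theorem OnCommonCycle.symm {u v : V} (h : OnCommonCycle A u v) : OnCommonCycle A v u :=
  let ⟨c, hc, hu, hv⟩ := h
  ⟨c, hc, hv, hu⟩

theorem OnCommonCycle.tail (hA : IsLocallyOutTournament A)
    (harc : ∀ u v : V, A u v → ∃ l : List V, IsCycle A l ∧ ArcOfCycle l u v)
    {u x y : V} (h : OnCommonCycle A u x) (hxy : A x y) : OnCommonCycle A u y := by
  obtain ⟨c, hc, hu, hx⟩ := h
  by_cases hyc : y ∈ c
  · exact ⟨c, hc, hu, hyc⟩
  obtain ⟨t, hct, hperm⟩ := hc.exists_perm_cons hx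
  rw [← hperm.mem_iff] at hu hyc
  rcases hA.dominates_or_exists_insertion hct.2.1 hxy hyc with
    hall | ⟨l₁, a, b, l₂, heq, hay, hyb⟩
  · exact onCommonCycle_of_arc harc (hall u hu)
  · rw [heq] at hct hyc hu
    refine ⟨_, hct.insert hyc hay hyb, ?_, by simp⟩
    simp only [List.mem_append, List.mem_cons] at hu ⊢
    tauto

theorem OnCommonCycle.trans_reflTransGen (hA : IsLocallyOutTournament A)
    (harc : ∀ u v : V, A u v → ∃ l : List V, IsCycle A l ∧ ArcOfCycle l u v)
    {u x y : V} (h : OnCommonCycle A u x) (hxy : ReflTransGen A x y) : OnCommonCycle A u y := by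
  induction hxy with
  | refl => exact h
  | tail _ hbc ih => exact ih.tail hA harc hbc

theorem IsCycle.reachK_of_mem (hcyc : ∀ l : List V, IsCycle A l → (cycleColors col l).card ≤ k)
    {u v : V} {t : List V} (hc : IsCycle A (v :: t)) (hu : u ∈ v :: t) : ReachK A col k v u := by
  obtain ⟨p, s, heq⟩ := List.append_of_mem hu
  have heq' : v :: t = (p ++ [u]) ++ s := by simp [heq]
  have hpre : p ++ [u] <+: v :: t := ⟨s, heq'.symm⟩
  refine ⟨p ++ [u], ⟨hc.2.1.prefix hpre, hc.2.2.1.sublist hpre.sublist, ?_, by simp⟩, ?_⟩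
  · simpa [List.head?_append_of_ne_nil] using (congrArg List.head? heq').symm
  · calc (listColors col (p ++ [u])).card ≤ (cycleColors col (v :: t)).card :=
          Finset.card_le_card <| (listColors_subset_of_prefix hpre).trans
            (listColors_subset_of_prefix (List.prefix_append _ _))
      _ ≤ k := hcyc _ hc

theorem OnCommonCycle.reachK (hcyc : ∀ l : List V, IsCycle A l → (cycleColors col l).card ≤ k)
    {u v : V} (h : OnCommonCycle A v u) : ReachK A col k v u := by
  obtain ⟨c, hc, hv, hu⟩ := h
  obtain ⟨t, hct, hperm⟩ := hc.exists_perm_cons hv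
  exact hct.reachK_of_mem hcyc (hperm.mem_iff.mpr hu)

end

/-- In an arc-colored locally out-tournament digraph in which every arc lies on a
directed cycle and every directed cycle uses at most `k` colors: if there is a
directed path from `u` to `v`, then there is a directed path from `v` to `u` using
at most `k` colors. -/
theorem stmt_16 (A : V → V → Prop) (col : V → V → ℕ) (k : ℕ)
    (hout : ∀ u v w : V, v ≠ w → A u v → A u w → (A v w ↔ ¬ A w v))
    (harc : ∀ u v : V, A u v → ∃ l : List V, IsCycle A l ∧ ArcOfCycle l u v)
    (hcyc : ∀ l : List V, IsCycle A l → (cycleColors col l).card ≤ k)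
    (u v : V) (h : Reach A u v) :
    ReachK A col k v u := by
  obtain ⟨l, hl⟩ := h
  rcases hl.reflTransGen.cases_head with rfl | ⟨w, huw, hwv⟩
  · exact reachK_self u
  · exact ((onCommonCycle_of_arc harc huw).trans_reflTransGen hout harc hwv).symm.reachK hcyc
end
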